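/- arXiv:2010.03826 — 2 statements merged into one kernel-verified Lean document; each statement's English description precedes it below -/
import Mathlib

section
/- For any finite index set [n+2], any graph H on vertices indexed by [n+2], and any subset I with {1,2} ⊆ I ⊆ [n+2]: ∑_{J ⊆ [n+2]∖I} (−1)^{|J|} · 1{for all j ∈ J : vertex j is not adjacent to I in H} = 1{for all j ∈ [n+2]∖I : vertex j is adjacent to I in H}. Consequently, ∑_{J ⊆ [n+2]} (−1)^{n−|J|} 1{x_1 ↔ x_2 in H[J]} = ∑_{I : {1,2}⊆I⊆[n+2]} (−1)^{n−|I|} 1{H[I] connected} · 1{every j ∉ I is adjacent to I}. -/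
open scoped Classical

namespace LZaux

variable {V : Type*} {H : SimpleGraph V}

lemma exists_walk_of_reach_induce {s : Set V} {a b : s} (h : (H.induce s).Reachable a b) :
    ∃ p : H.Walk a b, ∀ x ∈ p.support, x ∈ s := by
  obtain ⟨q⟩ := h
  refine ⟨q.map (SimpleGraph.Embedding.induce s).toHom, ?_⟩
  intro x hx
  have hx' : x ∈ (q.map (SimpleGraph.Embedding.induce s).toHom).support := hx
  rw [SimpleGraph.Walk.support_map, List.mem_map] at hx'
  obtain ⟨y, -, rfl⟩ := hx'
  exact y.2

lemma support_subset_of_closed [DecidableEq V] {K I : Finset V}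
    (hclosed : ∀ j ∈ K \ I, ∀ i ∈ I, ¬ H.Adj j i)
    {a b : V} (p : H.Walk a b) (hp : ∀ x ∈ p.support, x ∈ K) (ha : a ∈ I) :
    ∀ x ∈ p.support, x ∈ I := by
  induction p with
  | nil => simpa using ha
  | @cons u w v h q ih =>
    have hw : w ∈ I := by
      by_contra hw
      have hK : w ∈ K := hp w (by simp)
      exact hclosed w (Finset.mem_sdiff.mpr ⟨hK, hw⟩) u ha h.symm
    intro x hx
    rcases (by simpa using hx : x = u ∨ x ∈ q.support) with rfl | hx
    · exact ha
    · exact ih (fun y hy => hp y (by simp [hy])) hw x hx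

lemma key (n : ℕ) (H : SimpleGraph (Fin (n + 2))) (K : Finset (Fin (n + 2))) :
    ∑ I ∈ K.powerset.filter (fun I => (0 : Fin (n + 2)) ∈ I ∧ (1 : Fin (n + 2)) ∈ I),
      (if (H.induce (I : Set (Fin (n + 2)))).Connected then (1 : ℝ) else 0) *
        (if ∀ j ∈ K \ I, ∀ i ∈ I, ¬ H.Adj j i then 1 else 0)
      = if ∃ p : H.Walk 0 1, ∀ x ∈ p.support, x ∈ K then 1 else 0 := by
  have hstep : ∑ I ∈ K.powerset.filter (fun I => (0 : Fin (n + 2)) ∈ I ∧ (1 : Fin (n + 2)) ∈ I),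
      (if (H.induce (I : Set (Fin (n + 2)))).Connected then (1 : ℝ) else 0) *
        (if ∀ j ∈ K \ I, ∀ i ∈ I, ¬ H.Adj j i then 1 else 0)
      = (((K.powerset.filter (fun I => (0 : Fin (n + 2)) ∈ I ∧ (1 : Fin (n + 2)) ∈ I)).filter
          (fun I : Finset (Fin (n + 2)) => (H.induce (I : Set (Fin (n + 2)))).Connected ∧
            ∀ j ∈ K \ I, ∀ i ∈ I, ¬ H.Adj j i)).card : ℝ) := by
    rw [← Finset.sum_boole]
    refine Finset.sum_congr rfl fun I _ => ?_
    by_cases hA : (H.induce (I : Set (Fin (n + 2)))).Connected <;>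
      by_cases hB : ∀ j ∈ K \ I, ∀ i ∈ I, ¬ H.Adj j i <;> simp [hA, hB]
  rw [hstep]
  by_cases h : ∃ p : H.Walk 0 1, ∀ x ∈ p.support, x ∈ K
  · obtain ⟨p, hp⟩ := h
    set I₀ : Finset (Fin (n + 2)) :=
      K.filter (fun x => ∃ q : H.Walk 0 x, ∀ y ∈ q.support, y ∈ K) with hI₀def
    have h0K : (0 : Fin (n + 2)) ∈ K := hp _ p.start_mem_support
    have h1K : (1 : Fin (n + 2)) ∈ K := hp _ p.end_mem_support
    have hmem : ∀ x : Fin (n + 2), x ∈ I₀ ↔ x ∈ K ∧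
        ∃ q : H.Walk 0 x, ∀ y ∈ q.support, y ∈ K := fun x => by
      rw [hI₀def, Finset.mem_filter]
    have h0 : (0 : Fin (n + 2)) ∈ I₀ :=
      (hmem 0).mpr ⟨h0K, SimpleGraph.Walk.nil, by simpa using h0K⟩
    have h1 : (1 : Fin (n + 2)) ∈ I₀ := (hmem 1).mpr ⟨h1K, p, hp⟩
    have hsupp : ∀ (x : Fin (n + 2)) (q : H.Walk 0 x), (∀ y ∈ q.support, y ∈ K) →
        ∀ y ∈ q.support, y ∈ I₀ := by
      intro x q hq y hy
      exact (hmem y).mpr ⟨hq y hy, q.takeUntil y hy,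
        fun z hz => hq z (q.support_takeUntil_subset hy hz)⟩
    have hIK : I₀ ⊆ K := Finset.filter_subset _ _
    have hconn : (H.induce (I₀ : Set (Fin (n + 2)))).Connected := by
      apply SimpleGraph.induce_connected_of_patches (0 : Fin (n + 2)) (by exact_mod_cast h0)
      intro v hv
      obtain ⟨-, q, hq⟩ := (hmem v).mp (by exact_mod_cast hv)
      exact ⟨{z | z ∈ q.support}, fun z hz => by exact_mod_cast hsupp _ q hq z hz,
        q.start_mem_support, q.end_mem_support,
        (q.connected_induce_support).preconnected _ _⟩
    have hclosed : ∀ j ∈ K \ I₀, ∀ i ∈ I₀, ¬ H.Adj j i := by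
      intro j hj i hi hadj
      obtain ⟨hjK, hjI⟩ := Finset.mem_sdiff.mp hj
      obtain ⟨hiK, q, hq⟩ := (hmem i).mp hi
      refine hjI ((hmem j).mpr ⟨hjK, q.concat hadj.symm, ?_⟩)
      intro y hy
      rw [SimpleGraph.Walk.support_concat, List.mem_append,
        List.mem_singleton] at hy
      rcases hy with hy | rfl
      · exact hq y hy
      · exact hjK
    have hset : (K.powerset.filter (fun I => (0 : Fin (n + 2)) ∈ I ∧ (1 : Fin (n + 2)) ∈ I)).filter
          (fun I : Finset (Fin (n + 2)) => (H.induce (I : Set (Fin (n + 2)))).Connected ∧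
            ∀ j ∈ K \ I, ∀ i ∈ I, ¬ H.Adj j i) = {I₀} := by
      ext I
      simp only [Finset.mem_filter, Finset.mem_powerset, Finset.mem_singleton]
      constructor
      · rintro ⟨⟨hIK', h0I, h1I⟩, hconnI, hclosedI⟩
        apply Finset.Subset.antisymm
        · intro i hi
          obtain ⟨q, hq⟩ := exists_walk_of_reach_induce
            (hconnI.preconnected ⟨0, by exact_mod_cast h0I⟩ ⟨i, by exact_mod_cast hi⟩)
          exact (hmem i).mpr ⟨hIK' hi, q, fun y hy => hIK' (by exact_mod_cast hq y hy)⟩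
        · intro x hx
          obtain ⟨hxK, q, hq⟩ := (hmem x).mp hx
          exact support_subset_of_closed hclosedI q hq h0I x q.end_mem_support
      · rintro rfl
        exact ⟨⟨hIK, h0, h1⟩, hconn, hclosed⟩
    rw [hset, if_pos ⟨p, hp⟩]
    simp
  · rw [if_neg h]
    have hset : (K.powerset.filter (fun I => (0 : Fin (n + 2)) ∈ I ∧ (1 : Fin (n + 2)) ∈ I)).filter
          (fun I : Finset (Fin (n + 2)) => (H.induce (I : Set (Fin (n + 2)))).Connected ∧
            ∀ j ∈ K \ I, ∀ i ∈ I, ¬ H.Adj j i) = ∅ := by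
      ext I
      simp only [Finset.mem_filter, Finset.mem_powerset, Finset.notMem_empty, iff_false]
      rintro ⟨⟨hIK', h0I, h1I⟩, hconnI, -⟩
      obtain ⟨q, hq⟩ := exists_walk_of_reach_induce
        (hconnI.preconnected ⟨0, by exact_mod_cast h0I⟩ ⟨1, by exact_mod_cast h1I⟩)
      exact h ⟨q, fun y hy => hIK' (by exact_mod_cast hq y hy)⟩
    rw [hset]
    simp

lemma alt_real {α : Type*} [DecidableEq α] (S : Finset α) :
    (∑ J ∈ S.powerset, (-1 : ℝ) ^ J.card) = if S = ∅ then 1 else 0 := by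
  have h := Finset.sum_powerset_neg_one_pow_card (x := S)
  have h2 : (∑ J ∈ S.powerset, (-1 : ℝ) ^ J.card)
      = ((∑ J ∈ S.powerset, (-1 : ℤ) ^ J.card : ℤ) : ℝ) := by push_cast; rfl
  rw [h2, h]
  split_ifs <;> simp

lemma parti (n : ℕ) (H : SimpleGraph (Fin (n + 2))) (I : Finset (Fin (n + 2))) :
    (∑ J ∈ (Finset.univ \ I).powerset,
        (-1 : ℝ) ^ J.card * (if ∀ j ∈ J, ∀ i ∈ I, ¬ H.Adj j i then 1 else 0))
      = (if ∀ j ∈ Finset.univ \ I, ∃ i ∈ I, H.Adj j i then 1 else 0) := by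
  set S := (Finset.univ \ I).filter (fun j => ∀ i ∈ I, ¬ H.Adj j i) with hS
  have hSsub : S ⊆ Finset.univ \ I := Finset.filter_subset _ _
  have hterm : ∀ J ∈ (Finset.univ \ I).powerset,
      (-1 : ℝ) ^ J.card * (if ∀ j ∈ J, ∀ i ∈ I, ¬ H.Adj j i then 1 else 0)
      = if J ∈ S.powerset then (-1 : ℝ) ^ J.card else 0 := by
    intro J hJ
    rw [Finset.mem_powerset] at hJ
    by_cases hc : ∀ j ∈ J, ∀ i ∈ I, ¬ H.Adj j i
    · rw [if_pos hc, mul_one, if_pos (Finset.mem_powerset.mpr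
        (fun j hj => Finset.mem_filter.mpr ⟨hJ hj, hc j hj⟩))]
    · rw [if_neg hc, mul_zero, if_neg]
      intro hJS
      exact hc fun j hj => (Finset.mem_filter.mp (Finset.mem_powerset.mp hJS hj)).2
  rw [Finset.sum_congr rfl hterm, Finset.sum_ite_mem,
    Finset.inter_eq_right.mpr (Finset.powerset_mono.mpr hSsub), alt_real]
  congr 1
  simp only [eq_iff_iff]
  rw [hS, Finset.filter_eq_empty_iff]
  simp only [not_forall, not_not, exists_prop]

end LZaux

/-- Inclusion–exclusion identities relating the Last–Ziesche expansion of the two-point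
function to the `(±)`-graph expansion.  For a graph `H` on `[n+2]` (vertices `0` and `1`
playing the roles of `x₁` and `x₂`):
(i) for every `I ⊆ [n+2]` containing `0` and `1`,
`∑_{J ⊆ [n+2]∖I} (-1)^{|J|} 1{∀ j ∈ J : j ≁ I} = 1{∀ j ∈ [n+2]∖I : j ∼ I}`;
(ii) `∑_{J ⊆ [n+2]} (-1)^{n+|J|} 1{0 ↔ 1 in H[J]}` equals
`∑_{{0,1} ⊆ I ⊆ [n+2]} (-1)^{n+|I|} 1{H[I] connected} · 1{∀ j ∉ I : j ∼ I}`
(here `0 ↔ 1 in H[J]` means there is a walk from `0` to `1` whose support lies in `J`,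
and `(-1)^{n-|J|}` is written as `(-1)^{n+|J|}`, which has the same sign). -/
theorem last_ziesche_inclusion_exclusion (n : ℕ) (H : SimpleGraph (Fin (n + 2))) :
    (∀ I : Finset (Fin (n + 2)), (0 : Fin (n + 2)) ∈ I → (1 : Fin (n + 2)) ∈ I →
      (∑ J ∈ (Finset.univ \ I).powerset,
          (-1 : ℝ) ^ J.card * (if ∀ j ∈ J, ∀ i ∈ I, ¬ H.Adj j i then 1 else 0))
        = (if ∀ j ∈ Finset.univ \ I, ∃ i ∈ I, H.Adj j i then 1 else 0)) ∧
    (∑ J ∈ (Finset.univ : Finset (Fin (n + 2))).powerset,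
        (-1 : ℝ) ^ (n + J.card) *
          (if ∃ p : H.Walk 0 1, ∀ x ∈ p.support, x ∈ J then 1 else 0)
      = ∑ I ∈ (Finset.univ : Finset (Fin (n + 2))).powerset.filter
            (fun I => (0 : Fin (n + 2)) ∈ I ∧ (1 : Fin (n + 2)) ∈ I),
          (-1 : ℝ) ^ (n + I.card) *
            (if (H.induce (I : Set (Fin (n + 2)))).Connected then 1 else 0) *
            (if ∀ j ∈ Finset.univ \ I, ∃ i ∈ I, H.Adj j i then 1 else 0)) := by
  refine ⟨fun I _ _ => LZaux.parti n H I, ?_⟩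
  have step1 : ∀ K ∈ (Finset.univ : Finset (Fin (n + 2))).powerset,
      (-1 : ℝ) ^ (n + K.card) *
          (if ∃ p : H.Walk 0 1, ∀ x ∈ p.support, x ∈ K then 1 else 0)
      = ∑ I ∈ K.powerset.filter (fun I => (0 : Fin (n + 2)) ∈ I ∧ (1 : Fin (n + 2)) ∈ I),
          (-1 : ℝ) ^ (n + K.card) *
            ((if (H.induce (I : Set (Fin (n + 2)))).Connected then 1 else 0) *
              (if ∀ j ∈ K \ I, ∀ i ∈ I, ¬ H.Adj j i then 1 else 0)) := by
    intro K _
    rw [← LZaux.key n H K, Finset.mul_sum]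
  rw [Finset.sum_congr rfl step1]
  have hcomm : ∀ (I K : Finset (Fin (n + 2))),
      (I ∈ (Finset.univ : Finset (Fin (n + 2))).powerset.filter
          (fun I => (0 : Fin (n + 2)) ∈ I ∧ (1 : Fin (n + 2)) ∈ I) ∧
        K ∈ (Finset.univ : Finset (Fin (n + 2))).powerset.filter (fun K => I ⊆ K))
      ↔ (I ∈ K.powerset.filter (fun I => (0 : Fin (n + 2)) ∈ I ∧ (1 : Fin (n + 2)) ∈ I) ∧
        K ∈ (Finset.univ : Finset (Fin (n + 2))).powerset) := by
    intro I K
    simp only [Finset.mem_filter, Finset.mem_powerset, Finset.subset_univ, true_and, and_true]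
    tauto
  rw [← Finset.sum_comm' hcomm]
  refine Finset.sum_congr rfl fun I hI => ?_
  rw [← LZaux.parti n H I, mul_assoc, Finset.mul_sum, Finset.mul_sum]
  refine (Finset.sum_nbij' (fun J => I ∪ J) (fun K => K \ I) ?_ ?_ ?_ ?_ ?_).symm
  · intro J hJ
    simp only [Finset.mem_filter, Finset.mem_powerset, Finset.subset_univ, true_and]
    exact Finset.subset_union_left
  · intro K hK
    simp only [Finset.mem_powerset]
    exact fun x hx => Finset.mem_sdiff.mpr ⟨Finset.mem_univ x, (Finset.mem_sdiff.mp hx).2⟩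
  · intro J hJ
    rw [Finset.mem_powerset, Finset.subset_sdiff] at hJ
    exact Finset.union_sdiff_cancel_left hJ.2.symm
  · intro K hK
    simp only [Finset.mem_filter, Finset.mem_powerset] at hK
    exact Finset.union_sdiff_of_subset hK.2
  · intro J hJ
    rw [Finset.mem_powerset, Finset.subset_sdiff] at hJ
    rw [Finset.union_sdiff_cancel_left hJ.2.symm,
      Finset.card_union_of_disjoint hJ.2.symm]
    rw [show n + (I.card + J.card) = (n + I.card) + J.card by ring, pow_add]
    ring
end

section
/- Let G be a graph, I a subset of its vertices such that the complement I^c contains no edges of G, and suppose every vertex of I^c has at least one G-neighbor in I. Then ∑_F (−1)^{|F|} = (−1)^{|I^c|}, where the sum ranges over all subsets F of the edges of G between I and I^c such that every vertex j ∈ I^c is covered by at least one edge of F. -/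
open scoped Classical

private theorem aux_signed_cover {α β : Type*} [DecidableEq α] (R : α → β → Prop)
    (T : Finset β) :
    ∀ S : Finset α, (∀ a ∈ S, ∃! t, t ∈ T ∧ R a t) → (∀ t ∈ T, ∃ a ∈ S, R a t) →
    ∑ F ∈ S.powerset.filter (fun F => ∀ t ∈ T, ∃ a ∈ F, R a t), (-1 : ℤ) ^ F.card
      = (-1 : ℤ) ^ T.card := by
  classical
  induction T using Finset.induction_on with
  | empty =>
      intro S hu _
      have hS : S = ∅ := by
        apply Finset.eq_empty_of_forall_notMem
        intro a ha
        obtain ⟨t, ⟨ht, _⟩, _⟩ := hu a ha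
        exact absurd ht (Finset.notMem_empty t)
      subst hS
      simp
  | @insert t T' ht ih =>
      intro S hu hc
      set S₁ := S.filter (fun a => R a t) with hS₁
      set S₂ := S.filter (fun a => ¬ R a t) with hS₂
      -- key fact: if a ∈ S relates to some u ∈ T', then ¬ R a t
      have hkey : ∀ a ∈ S, ∀ u ∈ T', R a u → ¬ R a t := by
        intro a ha u hu' hru hrt
        obtain ⟨t₀, _, huniq⟩ := hu a ha
        have h1 : u = t₀ := huniq u ⟨Finset.mem_insert_of_mem hu', hru⟩
        have h2 : t = t₀ := huniq t ⟨Finset.mem_insert_self t T', hrt⟩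
        exact ht (by rw [h2, ← h1]; exact hu')
      have hbij :
          ∑ F ∈ S.powerset.filter (fun F => ∀ u ∈ insert t T', ∃ a ∈ F, R a u),
            (-1 : ℤ) ^ F.card
          = ∑ p ∈ (S₁.powerset.filter (fun A => A.Nonempty)) ×ˢ
              (S₂.powerset.filter (fun B => ∀ u ∈ T', ∃ a ∈ B, R a u)),
              (-1 : ℤ) ^ p.1.card * (-1 : ℤ) ^ p.2.card := by
        apply Finset.sum_nbij'
          (i := fun F => (F.filter (fun a => R a t), F.filter (fun a => ¬ R a t)))
          (j := fun p => p.1 ∪ p.2)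
        · intro F hF
          simp only [Finset.mem_filter, Finset.mem_powerset] at hF
          obtain ⟨hFS, hFcov⟩ := hF
          simp only [Finset.mem_product, Finset.mem_filter, Finset.mem_powerset]
          refine ⟨⟨?_, ?_⟩, ?_, ?_⟩
          · intro a ha
            simp only [hS₁, Finset.mem_filter] at ha ⊢
            exact ⟨hFS ha.1, ha.2⟩
          · obtain ⟨a, haF, har⟩ := hFcov t (Finset.mem_insert_self t T')
            exact ⟨a, Finset.mem_filter.2 ⟨haF, har⟩⟩
          · intro a ha
            simp only [hS₂, Finset.mem_filter] at ha ⊢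
            exact ⟨hFS ha.1, ha.2⟩
          · intro u hu'
            obtain ⟨a, haF, har⟩ := hFcov u (Finset.mem_insert_of_mem hu')
            exact ⟨a, ⟨haF, hkey a (hFS haF) u hu' har⟩, har⟩
        · rintro ⟨A, B⟩ hp
          simp only [Finset.mem_product, Finset.mem_filter, Finset.mem_powerset] at hp
          obtain ⟨⟨hA, hAne⟩, hB, hBcov⟩ := hp
          simp only [Finset.mem_filter, Finset.mem_powerset]
          constructor
          · intro a ha
            rcases Finset.mem_union.1 ha with h | h
            · exact Finset.mem_of_mem_filter a (hA h)
            · exact Finset.mem_of_mem_filter a (hB h)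
          · intro u hu'
            rcases Finset.mem_insert.1 hu' with rfl | hu''
            · obtain ⟨a, ha⟩ := hAne
              exact ⟨a, Finset.mem_union_left B ha, (Finset.mem_filter.1 (hA ha)).2⟩
            · obtain ⟨a, ha, har⟩ := hBcov u hu''
              exact ⟨a, Finset.mem_union_right A ha, har⟩
        · intro F _
          exact Finset.filter_union_filter_not_eq _ F
        · rintro ⟨A, B⟩ hp
          simp only [Finset.mem_product, Finset.mem_filter, Finset.mem_powerset] at hp
          obtain ⟨⟨hA, _⟩, hB, _⟩ := hp
          have h1 : (A ∪ B).filter (fun a => R a t) = A := by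
            rw [Finset.filter_union]
            rw [Finset.filter_true_of_mem (fun a ha => (Finset.mem_filter.1 (hA ha)).2),
                Finset.filter_false_of_mem (fun a ha => (Finset.mem_filter.1 (hB ha)).2),
                Finset.union_empty]
          have h2 : (A ∪ B).filter (fun a => ¬ R a t) = B := by
            rw [Finset.filter_union]
            rw [Finset.filter_false_of_mem
                  (fun a ha => not_not_intro (Finset.mem_filter.1 (hA ha)).2),
                Finset.filter_true_of_mem (fun a ha => (Finset.mem_filter.1 (hB ha)).2),
                Finset.empty_union]
          simp [h1, h2]
        · intro F _
          rw [← pow_add, ← Finset.card_union_of_disjoint (Finset.disjoint_filter_filter_not F F _),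
            Finset.filter_union_filter_not_eq]
      have hfact :
          ∑ p ∈ (S₁.powerset.filter (fun A => A.Nonempty)) ×ˢ
              (S₂.powerset.filter (fun B => ∀ u ∈ T', ∃ a ∈ B, R a u)),
              (-1 : ℤ) ^ p.1.card * (-1 : ℤ) ^ p.2.card
          = (∑ A ∈ S₁.powerset.filter (fun A => A.Nonempty), (-1 : ℤ) ^ A.card) *
            (∑ B ∈ S₂.powerset.filter (fun B => ∀ u ∈ T', ∃ a ∈ B, R a u),
              (-1 : ℤ) ^ B.card) := by
        rw [Finset.sum_mul_sum]
        exact Finset.sum_product _ _ _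
      rw [hbij, hfact]
      have hsum1 : ∑ A ∈ S₁.powerset.filter (fun A => A.Nonempty), (-1 : ℤ) ^ A.card = -1 := by
        have hS₁ne : S₁.Nonempty := by
          obtain ⟨a, ha, har⟩ := hc t (Finset.mem_insert_self t T')
          exact ⟨a, Finset.mem_filter.2 ⟨ha, har⟩⟩
        have htot := Finset.sum_powerset_neg_one_pow_card (x := S₁)
        rw [if_neg hS₁ne.ne_empty] at htot
        have hsplit := Finset.sum_filter_add_sum_filter_not S₁.powerset
          (fun A => A.Nonempty) (fun A => (-1 : ℤ) ^ A.card)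
        have hempt : S₁.powerset.filter (fun A => ¬ A.Nonempty) = {∅} := by
          ext A
          simp only [Finset.mem_filter, Finset.mem_powerset,
            Finset.not_nonempty_iff_eq_empty, Finset.mem_singleton]
          constructor
          · rintro ⟨-, h⟩; exact h
          · rintro rfl; exact ⟨Finset.empty_subset _, rfl⟩
        rw [hempt, htot] at hsplit
        simp only [Finset.sum_singleton, Finset.card_empty, pow_zero] at hsplit
        linarith
      have hsum2 : ∑ B ∈ S₂.powerset.filter (fun B => ∀ u ∈ T', ∃ a ∈ B, R a u),
          (-1 : ℤ) ^ B.card = (-1 : ℤ) ^ T'.card := by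
        apply ih S₂
        · intro a ha
          obtain ⟨haS, hnot⟩ := Finset.mem_filter.1 ha
          obtain ⟨t₀, ⟨ht₀, hr₀⟩, huniq⟩ := hu a haS
          have ht₀' : t₀ ∈ T' := by
            rcases Finset.mem_insert.1 ht₀ with rfl | h
            · exact absurd hr₀ hnot
            · exact h
          exact ⟨t₀, ⟨ht₀', hr₀⟩, fun u ⟨hu', hru⟩ =>
            huniq u ⟨Finset.mem_insert_of_mem hu', hru⟩⟩
        · intro u hu'
          obtain ⟨a, ha, har⟩ := hc u (Finset.mem_insert_of_mem hu')
          exact ⟨a, Finset.mem_filter.2 ⟨ha, hkey a ha u hu' har⟩, har⟩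
      rw [hsum1, hsum2, Finset.card_insert_of_notMem ht, pow_succ]
      ring

/-- Sign computation for the Last–Ziesche direct-connectedness expansion: let `G` be a
graph on a finite vertex type, `I` a vertex subset such that the complement `Iᶜ` spans no
edges of `G` and every vertex of `Iᶜ` has a `G`-neighbour in `I`.  Then
`∑_F (-1)^{|F|} = (-1)^{|Iᶜ|}`, the sum ranging over all subsets `F` of the edges of `G`
between `I` and `Iᶜ` such that every vertex of `Iᶜ` is covered by an edge of `F`. -/
theorem signed_cover_sum {V : Type*} [Fintype V] (G : SimpleGraph V) (I : Finset V)
    (hno : ∀ u v : V, u ∉ I → v ∉ I → ¬ G.Adj u v)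
    (hcov : ∀ v : V, v ∉ I → ∃ u ∈ I, G.Adj u v) :
    ∑ F ∈ (G.edgeFinset.filter fun e => ∃ v ∈ e, v ∉ I).powerset.filter
        (fun F => ∀ v : V, v ∉ I → ∃ e ∈ F, v ∈ e),
      (-1 : ℤ) ^ F.card = (-1 : ℤ) ^ (Finset.univ \ I).card := by
  classical
  have key := aux_signed_cover (R := fun (e : Sym2 V) (v : V) => v ∈ e)
    (T := Finset.univ \ I) (G.edgeFinset.filter fun e => ∃ v ∈ e, v ∉ I)
    ?_ ?_
  · rw [← key]
    congr 1
    ext F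
    simp only [Finset.mem_filter, Finset.mem_sdiff, Finset.mem_univ, true_and]
  · intro e he
    simp only [Finset.mem_filter, SimpleGraph.mem_edgeFinset] at he
    obtain ⟨hedge, v, hve, hvI⟩ := he
    refine ⟨v, ⟨Finset.mem_sdiff.2 ⟨Finset.mem_univ v, hvI⟩, hve⟩, ?_⟩
    rintro w ⟨hw, hwe⟩
    have hwI : w ∉ I := (Finset.mem_sdiff.1 hw).2
    -- e is an edge of G with two distinct endpoints; not both can be outside I
    by_contra hne
    induction e with
    | _ x y =>
      rw [SimpleGraph.mem_edgeSet] at hedge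
      rcases Sym2.mem_iff.1 hve with rfl | rfl <;> rcases Sym2.mem_iff.1 hwe with rfl | rfl
      · exact hne rfl
      · exact hno w v hwI hvI hedge.symm
      · exact hno v w hvI hwI hedge.symm
      · exact hne rfl
  · intro v hv
    have hvI : v ∉ I := (Finset.mem_sdiff.1 hv).2
    obtain ⟨u, huI, hadj⟩ := hcov v hvI
    refine ⟨s(u, v), ?_, Sym2.mem_mk_right u v⟩
    simp only [Finset.mem_filter, SimpleGraph.mem_edgeFinset, SimpleGraph.mem_edgeSet]
    exact ⟨hadj, v, Sym2.mem_mk_right u v, hvI⟩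
end
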